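/- Let N ≥ 2 be an integer and β a real number with β > N, and define ψ(r) = (1 + (r-1)β)^{1/N} for real r ≥ 1. Then there exists a unique r̄ > 1 with ψ(r̄) = r̄, and for every initial value r₀ > 1 the sequence defined by r_{i+1} = ψ(r_i), i = 0, 1, 2, …, converges monotonically to r̄ (nondecreasing if r₀ ≤ r̄ and nonincreasing if r₀ ≥ r̄). -/

import Mathlib

/-!
For `r > 1` we have `ψ r ^ N = 1 + (r - 1) β` and `r ^ N - 1 = (r - 1) S r` with
`S r = 1 + r + ⋯ + r ^ (N - 1)`, so `r < ψ r`, `r = ψ r`, `r > ψ r` according as `S r < β`,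
`S r = β`, `S r > β`. Since `S` is strictly increasing with `S 1 = N < β < S β`, it crosses `β`
at exactly one `r̄ > 1`. The map `ψ` is continuous and increasing, so its iterates move
monotonically towards `r̄` without crossing it, and their limit is a fixed point, hence `r̄`.
-/

open Set Filter Topology

section IterateConvergence

variable {α : Type*} {f : α → α} {x p : α}

theorem mapsTo_Icc_of_lt_map [PartialOrder α] (hp : f p = p) (hmono : MonotoneOn f (Icc x p))
    (hlt : ∀ y ∈ Ico x p, y < f y) : MapsTo f (Icc x p) (Icc x p) := by
  intro y hy
  refine ⟨?_, hp ▸ hmono hy ⟨hy.1.trans hy.2, le_rfl⟩ hy.2⟩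
  rcases hy.2.lt_or_eq with hyp | rfl
  · exact hy.1.trans (hlt y ⟨hy.1, hyp⟩).le
  · exact hp.symm ▸ hy.1

theorem monotone_iterate_of_lt_map [PartialOrder α] (hp : f p = p)
    (hmono : MonotoneOn f (Icc x p)) (hlt : ∀ y ∈ Ico x p, y < f y) (hxp : x ≤ p) :
    Monotone fun n => f^[n] x := by
  refine monotone_nat_of_le_succ fun n => ?_
  have hy := (mapsTo_Icc_of_lt_map hp hmono hlt).iterate n ⟨le_rfl, hxp⟩
  rw [Function.iterate_succ_apply']
  rcases hy.2.lt_or_eq with hyp | hyp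
  · exact (hlt _ ⟨hy.1, hyp⟩).le
  · rw [hyp, hp]

theorem antitone_iterate_of_map_lt [PartialOrder α] (hp : f p = p)
    (hmono : MonotoneOn f (Icc p x)) (hlt : ∀ y ∈ Ioc p x, f y < y) (hpx : p ≤ x) :
    Antitone fun n => f^[n] x :=
  monotone_iterate_of_lt_map (α := αᵒᵈ) hp
    (fun _ ha _ hb hab => hmono ⟨hb.2, hb.1⟩ ⟨ha.2, ha.1⟩ hab)
    (fun y hy => hlt y ⟨hy.2, hy.1⟩) hpx

variable [ConditionallyCompleteLinearOrder α] [TopologicalSpace α] [OrderTopology α]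

theorem tendsto_iterate_of_lt_map (hp : f p = p) (hmono : MonotoneOn f (Icc x p))
    (hlt : ∀ y ∈ Ico x p, y < f y) (hf : ContinuousOn f (Icc x p)) (hxp : x ≤ p) :
    Tendsto (fun n => f^[n] x) atTop (𝓝 p) := by
  set u := fun n => f^[n] x
  have hmem : ∀ n, u n ∈ Icc x p :=
    fun n => (mapsTo_Icc_of_lt_map hp hmono hlt).iterate n ⟨le_rfl, hxp⟩
  have hu := tendsto_atTop_ciSup (monotone_iterate_of_lt_map hp hmono hlt hxp)
    ⟨p, forall_mem_range.2 fun n => (hmem n).2⟩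
  have hL : (⨆ n, u n) ∈ Icc x p := isClosed_Icc.mem_of_tendsto hu (.of_forall hmem)
  have hfix : f (⨆ n, u n) = ⨆ n, u n := by
    refine tendsto_nhds_unique ?_ ((tendsto_add_atTop_iff_nat 1).2 hu)
    have := (hf _ hL).tendsto.comp (tendsto_nhdsWithin_iff.2 ⟨hu, .of_forall hmem⟩)
    simpa only [u, Function.comp_def, ← Function.iterate_succ_apply'] using this
  rcases hL.2.lt_or_eq with hLp | hLp
  · exact absurd hfix (hlt _ ⟨hL.1, hLp⟩).ne'
  · rwa [hLp] at hu

theorem tendsto_iterate_of_map_lt (hp : f p = p) (hmono : MonotoneOn f (Icc p x))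
    (hlt : ∀ y ∈ Ioc p x, f y < y) (hf : ContinuousOn f (Icc p x)) (hpx : p ≤ x) :
    Tendsto (fun n => f^[n] x) atTop (𝓝 p) :=
  tendsto_iterate_of_lt_map (α := αᵒᵈ) hp
    (fun _ ha _ hb hab => hmono ⟨hb.2, hb.1⟩ ⟨ha.2, ha.1⟩ hab)
    (fun y hy => hlt y ⟨hy.2, hy.1⟩) (hf.mono fun _ hy => ⟨hy.2, hy.1⟩) hpx

theorem tendsto_iterate_of_lt_map_of_map_lt (hp : f p = p) (hmono : MonotoneOn f (uIcc x p))
    (hlt : ∀ y ∈ Ico x p, y < f y) (hgt : ∀ y ∈ Ioc p x, f y < y)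
    (hf : ContinuousOn f (uIcc x p)) : Tendsto (fun n => f^[n] x) atTop (𝓝 p) := by
  rcases le_total x p with hxp | hpx
  · exact tendsto_iterate_of_lt_map hp (hmono.mono Icc_subset_uIcc) hlt
      (hf.mono Icc_subset_uIcc) hxp
  · exact tendsto_iterate_of_map_lt hp (hmono.mono Icc_subset_uIcc') hgt
      (hf.mono Icc_subset_uIcc') hpx

end IterateConvergence

theorem strictMonoOn_geom_sum {R : Type*} [Semiring R] [PartialOrder R] [IsStrictOrderedRing R]
    {N : ℕ} (hN : 2 ≤ N) : StrictMonoOn (fun r : R => ∑ i ∈ Finset.range N, r ^ i) (Ici 0) :=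
  fun r hr s _ hrs => Finset.sum_lt_sum (fun i _ => pow_le_pow_left₀ hr hrs.le i)
    ⟨1, Finset.mem_range.2 hN, by simpa using hrs⟩

theorem exists_geom_sum_eq {N : ℕ} (hN : 2 ≤ N) {β : ℝ} (hβ : (N : ℝ) < β) :
    ∃ p, 1 < p ∧ ∑ i ∈ Finset.range N, p ^ i = β := by
  have hβ1 : 1 < β := by linarith [show (2 : ℝ) ≤ N by exact_mod_cast hN]
  have hβsum : β < ∑ i ∈ Finset.range N, β ^ i :=
    calc β < ∑ i ∈ Finset.range 2, β ^ i := by simp [Finset.sum_range_succ]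
      _ ≤ _ := Finset.sum_le_sum_of_subset_of_nonneg (Finset.range_subset_range.2 hN)
          fun i _ _ => by positivity
  obtain ⟨p, hp, hpβ⟩ := intermediate_value_Ioo hβ1.le
    (f := fun r : ℝ => ∑ i ∈ Finset.range N, r ^ i) (by fun_prop)
    ⟨by simpa using hβ, hβsum⟩
  exact ⟨p, hp.1, hpβ⟩

noncomputable def meshRatioMap (N : ℕ) (β r : ℝ) : ℝ := (1 + (r - 1) * β) ^ ((1 : ℝ) / N)

section MeshRatioMap

variable {N : ℕ} {β r : ℝ}

theorem continuous_meshRatioMap (N : ℕ) (β : ℝ) : Continuous (meshRatioMap N β) :=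
  (Real.continuous_rpow_const (by positivity)).comp (by fun_prop)

theorem monotoneOn_meshRatioMap (hβ : 0 ≤ β) : MonotoneOn (meshRatioMap N β) (Ici 1) :=
  fun r hr s _ hrs => Real.rpow_le_rpow (add_nonneg zero_le_one (mul_nonneg (sub_nonneg.2 hr) hβ))
    (by gcongr) (by positivity)

theorem lt_meshRatioMap_iff (hN : N ≠ 0) (hβ : 0 ≤ β) (hr : 1 < r) :
    r < meshRatioMap N β r ↔ ∑ i ∈ Finset.range N, r ^ i < β := by
  rw [meshRatioMap, one_div, Real.lt_rpow_inv_iff_of_pos (by linarith)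
    (add_nonneg zero_le_one (mul_nonneg (sub_nonneg.2 hr.le) hβ)) (by positivity),
    Real.rpow_natCast, ← sub_lt_iff_lt_add', ← geom_sum_mul, mul_comm (r - 1) β,
    mul_lt_mul_iff_of_pos_right (sub_pos.2 hr)]

theorem meshRatioMap_lt_iff (hN : N ≠ 0) (hβ : 0 ≤ β) (hr : 1 < r) :
    meshRatioMap N β r < r ↔ β < ∑ i ∈ Finset.range N, r ^ i := by
  rw [meshRatioMap, one_div, Real.rpow_inv_lt_iff_of_pos
    (add_nonneg zero_le_one (mul_nonneg (sub_nonneg.2 hr.le) hβ)) (by linarith) (by positivity),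
    Real.rpow_natCast, ← lt_sub_iff_add_lt', ← geom_sum_mul, mul_comm (r - 1) β,
    mul_lt_mul_iff_of_pos_right (sub_pos.2 hr)]

theorem meshRatioMap_eq_self_iff (hN : N ≠ 0) (hβ : 0 ≤ β) (hr : 1 < r) :
    meshRatioMap N β r = r ↔ ∑ i ∈ Finset.range N, r ^ i = β := by
  rw [le_antisymm_iff, ← not_lt, ← not_lt, lt_meshRatioMap_iff hN hβ hr,
    meshRatioMap_lt_iff hN hβ hr, not_lt, not_lt, ← le_antisymm_iff, eq_comm]

end MeshRatioMap

theorem stmt_6 (N : ℕ) (hN : 2 ≤ N) (β : ℝ) (hβ : (N : ℝ) < β)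
    (ψ : ℝ → ℝ) (hψ : ∀ r : ℝ, ψ r = (1 + (r - 1) * β) ^ ((1 : ℝ) / N)) :
    (∃! rbar : ℝ, 1 < rbar ∧ ψ rbar = rbar) ∧
    (∀ rbar : ℝ, 1 < rbar → ψ rbar = rbar →
      ∀ r₀ : ℝ, 1 < r₀ →
        Filter.Tendsto (fun i : ℕ => ψ^[i] r₀) Filter.atTop (nhds rbar) ∧
        (r₀ ≤ rbar → Monotone (fun i : ℕ => ψ^[i] r₀)) ∧
        (rbar ≤ r₀ → Antitone (fun i : ℕ => ψ^[i] r₀))) := by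
  obtain rfl : ψ = meshRatioMap N β := funext hψ
  have hN0 : N ≠ 0 := by omega
  have hβ0 : 0 ≤ β := (Nat.cast_nonneg N).trans hβ.le
  obtain ⟨p, hp1, hp⟩ := exists_geom_sum_eq hN hβ
  have hS := (strictMonoOn_geom_sum (R := ℝ) hN).mono (Ioi_subset_Ici zero_le_one)
  have hfix : ∀ r, 1 < r → (meshRatioMap N β r = r ↔ r = p) := fun r hr => by
    rw [meshRatioMap_eq_self_iff hN0 hβ0 hr, ← hp, hS.injOn.eq_iff hr hp1]
  have hpfix : meshRatioMap N β p = p := (hfix p hp1).2 rfl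
  refine ⟨⟨p, ⟨hp1, hpfix⟩, fun r hr => (hfix r hr.1).1 hr.2⟩, ?_⟩
  rintro rbar hrbar hrbar_fix r₀ hr₀
  rw [(hfix rbar hrbar).1 hrbar_fix]
  have hbelow : ∀ r ∈ Ico r₀ p, r < meshRatioMap N β r := fun r hr =>
    (lt_meshRatioMap_iff hN0 hβ0 (hr₀.trans_le hr.1)).2 (hp ▸ hS (hr₀.trans_le hr.1) hp1 hr.2)
  have habove : ∀ r ∈ Ioc p r₀, meshRatioMap N β r < r := fun r hr =>
    (meshRatioMap_lt_iff hN0 hβ0 (hp1.trans hr.1)).2 (hp ▸ hS hp1 (hp1.trans hr.1) hr.1)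
  have hmono : MonotoneOn (meshRatioMap N β) (uIcc r₀ p) :=
    (monotoneOn_meshRatioMap hβ0).mono fun r hr => (le_min hr₀.le hp1.le).trans hr.1
  exact ⟨tendsto_iterate_of_lt_map_of_map_lt hpfix hmono hbelow habove
      (continuous_meshRatioMap N β).continuousOn,
    monotone_iterate_of_lt_map hpfix (hmono.mono Icc_subset_uIcc) hbelow,
    antitone_iterate_of_map_lt hpfix (hmono.mono Icc_subset_uIcc') habove⟩
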